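/- For the worst-case example graph with even k, after removing the k perfect matchings M_1,...,M_k (as defined via shifts modulo k+1), the residual graph has edge set {{a_j, b_{2j}} : j ∈ {1,...,k}} ∪ {{a_{k+1}, w}, {u, w}, {u, b_{k+1}}}, the edges {a_j, b_{2j}} are pairwise vertex-disjoint, and every maximum independent set of the residual graph has exactly k+2 vertices. -/

import Mathlib

open scoped Classical

/-- A matching of `G`, given as a finite set of edges of `G` that are pairwise vertex-disjoint. -/
def IsMatchingE {V : Type*} (G : SimpleGraph V) (M : Finset (Sym2 V)) : Prop :=
  ↑M ⊆ G.edgeSet ∧ (M : Set (Sym2 V)).Pairwise fun e f => ∀ v, v ∈ e → v ∉ f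

/-- A maximum-cardinality matching of `G`. -/
def IsMaxMatchingE {V : Type*} (G : SimpleGraph V) (M : Finset (Sym2 V)) : Prop :=
  IsMatchingE G M ∧ ∀ M', IsMatchingE G M' → M'.card ≤ M.card

/-- An independent set of `G`. -/
def IsIndepF {V : Type*} (G : SimpleGraph V) (S : Finset V) : Prop :=
  ∀ v ∈ S, ∀ w ∈ S, ¬G.Adj v w

/-- A maximum-cardinality independent set of `G`. -/
def IsMaxIndepF {V : Type*} (G : SimpleGraph V) (S : Finset V) : Prop :=
  IsIndepF G S ∧ ∀ S', IsIndepF G S' → S'.card ≤ S.card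

/-- A `k`-dependent set: every vertex of the induced subgraph `G[S]` has degree at most `k`. -/
def KDepSet {V : Type*} (G : SimpleGraph V) (k : ℕ) (S : Finset V) : Prop :=
  ∀ v ∈ S, (S.filter fun w => G.Adj v w).card ≤ k

/-- The residual graph after deleting the matchings `M 0, ..., M (i-1)` from `G`. -/
def resid {V : Type*} (G : SimpleGraph V) (M : ℕ → Finset (Sym2 V)) (i : ℕ) : SimpleGraph V :=
  G.deleteEdges (⋃ j ∈ Set.Iio i, (M j : Set (Sym2 V)))

/-- The vertex set of the worst-case example graph: `A ∪ {u}` on the left, `B ∪ {w}` on the right. -/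
abbrev ExV (k : ℕ) := (Fin (k+1) ⊕ Unit) ⊕ (Fin (k+1) ⊕ Unit)

/-- The base relation of the worst-case example graph: `u ~ w`, `aᵢ ~ bⱼ` for `i ≠ j`,
`aᵢ ~ w` and `u ~ bⱼ` for all `i, j`. -/
def exRel (k : ℕ) : ExV k → ExV k → Prop
  | Sum.inl x, Sum.inr y =>
    match x, y with
    | Sum.inl i, Sum.inl j => i ≠ j
    | _, _ => True
  | _, _ => False

/-- The worst-case example bipartite graph. -/
def exGraph (k : ℕ) : SimpleGraph (ExV k) := SimpleGraph.fromRel (exRel k)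

/-- The vertex `aᵢ` (index taken modulo `k+1`). -/
def aV (k : ℕ) (i : ℕ) : ExV k := Sum.inl (Sum.inl (Fin.ofNat (k+1) i))
/-- The vertex `bᵢ` (index taken modulo `k+1`). -/
def bV (k : ℕ) (i : ℕ) : ExV k := Sum.inr (Sum.inl (Fin.ofNat (k+1) i))
/-- The vertex `u`. -/
def uV (k : ℕ) : ExV k := Sum.inl (Sum.inr ())
/-- The vertex `w`. -/
def wV (k : ℕ) : ExV k := Sum.inr (Sum.inr ())

/-- The vertex set `A ∪ B`. -/
def ABset (k : ℕ) : Finset (ExV k) :=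
  (Finset.univ.image fun i : Fin (k+1) => (Sum.inl (Sum.inl i) : ExV k)) ∪
  (Finset.univ.image fun i : Fin (k+1) => (Sum.inr (Sum.inl i) : ExV k))

/-- The matching `M_j = ({{aᵢ, b_{i+j}} : i ∈ {1,...,k+1}} \ {{a_j, b_{2j}}}) ∪ {{a_j,w},{b_{2j},u}}`,
indices of `b` taken modulo `k+1`. -/
def Mj (k j : ℕ) : Finset (Sym2 (ExV k)) :=
  (((Finset.range (k+1)).image fun i => s(aV k (i+1), bV k (i+1+j))) \ {s(aV k j, bV k (2*j))})
    ∪ {s(aV k j, wV k), s(bV k (2*j), uV k)}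

/-- The residual graph obtained from the example graph after removing `M_1, ..., M_k`. -/
def residEx (k : ℕ) : SimpleGraph (ExV k) :=
  (exGraph k).deleteEdges (⋃ j ∈ Set.Icc 1 k, (Mj k j : Set (Sym2 (ExV k))))

/-!
For `p ≠ q` the edge `a_p b_q` lies in the matching `M_{q-p}` unless it is the edge removed
from it, i.e. unless `q = 2p`; the edge `a_p w` lies in `M_p` for `p ≠ 0`, and `u b_q` lies in
`M_{q/2}` for `q ≠ 0`, where halving makes sense because `k + 1` is odd. Hence the residual
graph consists of the edges `a_p b_{2p}` (`p ≠ 0`) and the path `a_0 w u b_0`. Its vertices are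
covered by the `k + 2` edges `a_p b_{2p}`, `a_0 w`, `u b_0`, so an independent set has at most
`k + 2` vertices, and `{a_0, …, a_k, u}` is an independent set of that size.
-/

open Fin.NatCast Fin.CommRing

variable {k : ℕ}

/-- The inverse of `2` in `Fin (k+1)` when `k` is even. -/
def halfFin (k : ℕ) : Fin (k+1) := (k / 2 + 1 : ℕ)

lemma two_mul_halfFin (hke : Even k) : 2 * halfFin k = 1 := by
  have h : 2 * (k / 2 + 1) = (k + 1) + 1 := by obtain ⟨m, rfl⟩ := hke; omega
  have h2 : (2 : Fin (k+1)) = ((2 : ℕ) : Fin (k+1)) := by simp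
  rw [halfFin, h2, ← Nat.cast_mul, h]
  simp

lemma two_mul_halfFin_mul (hke : Even k) (x : Fin (k+1)) : 2 * (halfFin k * x) = x := by
  rw [← mul_assoc, two_mul_halfFin hke, one_mul]

lemma halfFin_mul_two_mul (hke : Even k) (x : Fin (k+1)) : halfFin k * (2 * x) = x := by
  rw [mul_left_comm, two_mul_halfFin_mul hke]

lemma halfFin_mul_ne_zero (hke : Even k) {q : Fin (k+1)} (hq : q ≠ 0) : halfFin k * q ≠ 0 :=
  fun h => hq (by rw [← two_mul_halfFin_mul hke q, h, mul_zero])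

lemma exists_mem_Icc_natCast_iff (P : Fin (k+1) → Prop) :
    (∃ j : ℕ, (1 ≤ j ∧ j ≤ k) ∧ P j) ↔ ∃ x ≠ 0, P x := by
  constructor
  · rintro ⟨j, ⟨hj1, hjk⟩, hP⟩
    refine ⟨j, ?_, hP⟩
    rw [Ne, Fin.natCast_eq_zero]
    exact fun h => absurd (Nat.le_of_dvd (by omega) h) (by omega)
  · rintro ⟨x, hx, hP⟩
    refine ⟨x.val, ⟨Nat.one_le_iff_ne_zero.mpr (Fin.val_ne_zero_iff.mpr hx), by omega⟩, ?_⟩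
    rwa [Fin.cast_val_eq_self]

lemma natCast_inj_of_le {j j' : ℕ} (hj : j ≤ k) (hj' : j' ≤ k)
    (h : (j : Fin (k+1)) = j') : j = j' :=
  CharP.natCast_injOn_Iio (Fin (k+1)) (k+1) (Set.mem_Iio.mpr (Nat.lt_succ_of_le hj))
    (Set.mem_Iio.mpr (Nat.lt_succ_of_le hj')) h

def aFin (k : ℕ) (p : Fin (k+1)) : ExV k := Sum.inl (Sum.inl p)
def bFin (k : ℕ) (q : Fin (k+1)) : ExV k := Sum.inr (Sum.inl q)

lemma aV_eq_aFin (i : ℕ) : aV k i = aFin k i := rfl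
lemma bV_eq_bFin (i : ℕ) : bV k i = bFin k i := rfl

lemma ab_mem_Mj_iff (j : ℕ) (p q : Fin (k+1)) :
    s(aFin k p, bFin k q) ∈ Mj k j ↔ q = p + j ∧ ¬(p = j ∧ q = 2 * j) := by
  simp only [Mj, Finset.mem_union, Finset.mem_sdiff, Finset.mem_image, Finset.mem_range,
    Finset.mem_insert, Finset.mem_singleton, aV_eq_aFin, bV_eq_bFin, aFin, bFin, uV, wV,
    Sym2.eq_iff, Sum.inl.injEq, Sum.inr.injEq, reduceCtorEq, and_false, false_and, or_false,
    Nat.cast_mul, Nat.cast_ofNat]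
  refine and_congr_left fun _ => ⟨?_, fun hq => ⟨(p - 1).val, (p - 1).isLt, ?_⟩⟩
  · rintro ⟨i, -, rfl, rfl⟩
    push_cast; ring
  · push_cast [Fin.cast_val_eq_self]
    exact ⟨by ring, by rw [hq]; ring⟩

lemma aw_mem_Mj_iff (j : ℕ) (p : Fin (k+1)) : s(aFin k p, wV k) ∈ Mj k j ↔ p = j := by
  simp [Mj, aV_eq_aFin, bV_eq_bFin, aFin, bFin, uV, wV]

lemma ub_mem_Mj_iff (j : ℕ) (q : Fin (k+1)) : s(uV k, bFin k q) ∈ Mj k j ↔ q = 2 * j := by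
  simp [Mj, aV_eq_aFin, bV_eq_bFin, aFin, bFin, uV, wV]

lemma uw_notMem_Mj (j : ℕ) : s(uV k, wV k) ∉ Mj k j := by
  simp [Mj, aV, bV, uV, wV]

def removedEdges (k : ℕ) : Set (Sym2 (ExV k)) :=
  ⋃ j ∈ Set.Icc 1 k, (Mj k j : Set (Sym2 (ExV k)))

lemma ab_mem_removedEdges_iff (p q : Fin (k+1)) :
    s(aFin k p, bFin k q) ∈ removedEdges k ↔ p ≠ q ∧ q ≠ 2 * p := by
  simp only [removedEdges, Set.mem_iUnion₂, Set.mem_Icc, Finset.mem_coe, exists_prop,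
    ab_mem_Mj_iff]
  rw [exists_mem_Icc_natCast_iff fun x => q = p + x ∧ ¬(p = x ∧ q = 2 * x)]
  constructor
  · rintro ⟨x, hx, rfl, hne⟩
    refine ⟨fun h => hx (by simpa using h), fun h => ?_⟩
    have hxp : x = p := add_left_cancel (h.trans (two_mul p))
    exact hne ⟨hxp.symm, by rw [hxp, two_mul]⟩
  · rintro ⟨hpq, hq⟩
    refine ⟨q - p, sub_ne_zero.mpr (Ne.symm hpq), by ring, ?_⟩
    rintro ⟨h, -⟩
    exact hq (by linear_combination -h)

lemma aw_mem_removedEdges_iff (p : Fin (k+1)) :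
    s(aFin k p, wV k) ∈ removedEdges k ↔ p ≠ 0 := by
  simp only [removedEdges, Set.mem_iUnion₂, Set.mem_Icc, Finset.mem_coe, exists_prop,
    aw_mem_Mj_iff]
  rw [exists_mem_Icc_natCast_iff fun x => p = x]
  simp

lemma ub_mem_removedEdges_iff (hke : Even k) (q : Fin (k+1)) :
    s(uV k, bFin k q) ∈ removedEdges k ↔ q ≠ 0 := by
  simp only [removedEdges, Set.mem_iUnion₂, Set.mem_Icc, Finset.mem_coe, exists_prop,
    ub_mem_Mj_iff]
  rw [exists_mem_Icc_natCast_iff fun x => q = 2 * x]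
  constructor
  · rintro ⟨x, hx, rfl⟩
    exact fun h => hx (by rw [← halfFin_mul_two_mul hke x, h, mul_zero])
  · intro hq
    refine ⟨halfFin k * q, fun h => hq ?_, (two_mul_halfFin_mul hke q).symm⟩
    rw [← two_mul_halfFin_mul hke q, h, mul_zero]

lemma uw_notMem_removedEdges : s(uV k, wV k) ∉ removedEdges k := by
  simp [removedEdges, uw_notMem_Mj]

def residEdges (k : ℕ) : Finset (Sym2 (ExV k)) :=
  ((Finset.Icc 1 k).image fun j => s(aV k j, bV k (2*j))) ∪
    ({s(aV k (k+1), wV k), s(uV k, wV k), s(uV k, bV k (k+1))} : Finset (Sym2 (ExV k)))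

lemma ab_mem_residEdges_iff (p q : Fin (k+1)) :
    s(aFin k p, bFin k q) ∈ residEdges k ↔ p ≠ 0 ∧ q = 2 * p := by
  simp only [residEdges, Finset.mem_union, Finset.mem_image, Finset.mem_insert,
    Finset.mem_singleton, aV_eq_aFin, bV_eq_bFin, aFin, bFin, uV, wV, Sym2.eq_iff,
    Sum.inl.injEq, Sum.inr.injEq, reduceCtorEq, and_false, false_and, or_false,
    Nat.cast_mul, Nat.cast_ofNat, Finset.mem_Icc]
  rw [exists_mem_Icc_natCast_iff fun x => x = p ∧ 2 * x = q]
  constructor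
  · rintro ⟨x, hx, rfl, rfl⟩
    exact ⟨hx, rfl⟩
  · rintro ⟨hp, rfl⟩
    exact ⟨p, hp, rfl, rfl⟩

lemma aw_mem_residEdges_iff (p : Fin (k+1)) : s(aFin k p, wV k) ∈ residEdges k ↔ p = 0 := by
  simp [residEdges, aV_eq_aFin, bV_eq_bFin, aFin, bFin, uV, wV, eq_comm]

lemma ub_mem_residEdges_iff (q : Fin (k+1)) : s(uV k, bFin k q) ∈ residEdges k ↔ q = 0 := by
  simp [residEdges, aV_eq_aFin, bV_eq_bFin, aFin, bFin, uV, wV, eq_comm]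

lemma uw_mem_residEdges : s(uV k, wV k) ∈ residEdges k := by
  simp [residEdges]

lemma inl_inl_notMem_residEdges (x y : Fin (k+1) ⊕ Unit) :
    s((Sum.inl x : ExV k), Sum.inl y) ∉ residEdges k := by
  simp [residEdges, aV, bV, uV, wV]

lemma inr_inr_notMem_residEdges (x y : Fin (k+1) ⊕ Unit) :
    s((Sum.inr x : ExV k), Sum.inr y) ∉ residEdges k := by
  simp [residEdges, aV, bV, uV, wV]

lemma exGraph_not_adj_inl_inl (x y : Fin (k+1) ⊕ Unit) :
    ¬(exGraph k).Adj (Sum.inl x) (Sum.inl y) := by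
  simp [exGraph, exRel]

lemma exGraph_not_adj_inr_inr (x y : Fin (k+1) ⊕ Unit) :
    ¬(exGraph k).Adj (Sum.inr x) (Sum.inr y) := by
  simp [exGraph, exRel]

lemma exGraph_adj_inl_inr (x y : Fin (k+1) ⊕ Unit) :
    (exGraph k).Adj (Sum.inl x) (Sum.inr y) ↔ ∀ p q, x = .inl p → y = .inl q → p ≠ q := by
  rcases x with p | ⟨⟩ <;> rcases y with q | ⟨⟩ <;> simp [exGraph, exRel]

lemma inl_inr_mem_residEdges_iff (hke : Even k) (x y : Fin (k+1) ⊕ Unit) :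
    s((Sum.inl x : ExV k), Sum.inr y) ∈ residEdges k ↔
      (exGraph k).Adj (Sum.inl x) (Sum.inr y) ∧ s(Sum.inl x, Sum.inr y) ∉ removedEdges k := by
  rw [exGraph_adj_inl_inr]
  rcases x with p | ⟨⟨⟩⟩ <;> rcases y with q | ⟨⟨⟩⟩
  · rw [← aFin, ← bFin, ab_mem_residEdges_iff, ab_mem_removedEdges_iff]
    simp only [ne_eq, Sum.inl.injEq, forall_apply_eq_imp_iff, forall_eq', not_and,
      Decidable.not_not]
    constructor
    · rintro ⟨hp, rfl⟩
      exact ⟨fun h => hp (by linear_combination -h), fun _ => rfl⟩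
    · rintro ⟨hpq, hq⟩
      refine ⟨fun hp => hpq ?_, hq hpq⟩
      rw [hq hpq, hp, mul_zero]
  · rw [← aFin, ← wV, aw_mem_residEdges_iff, aw_mem_removedEdges_iff]
    simp
  · rw [← uV, ← bFin, ub_mem_residEdges_iff, ub_mem_removedEdges_iff hke]
    simp
  · rw [← uV, ← wV]
    exact iff_of_true uw_mem_residEdges ⟨by simp, uw_notMem_removedEdges⟩

lemma residEx_edgeSet (hke : Even k) : (residEx k).edgeSet = residEdges k := by
  ext e
  induction e using Sym2.ind with
  | _ x y =>
  change s(x, y) ∈ ((exGraph k).deleteEdges (removedEdges k)).edgeSet ↔ _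
  rw [SimpleGraph.edgeSet_deleteEdges, Set.mem_sdiff, SimpleGraph.mem_edgeSet, Finset.mem_coe]
  rcases x with x | x <;> rcases y with y | y
  · exact iff_of_false (fun h => exGraph_not_adj_inl_inl x y h.1) (inl_inl_notMem_residEdges x y)
  · exact (inl_inr_mem_residEdges_iff hke x y).symm
  · rw [Sym2.eq_swap, SimpleGraph.adj_comm]
    exact (inl_inr_mem_residEdges_iff hke y x).symm
  · exact iff_of_false (fun h => exGraph_not_adj_inr_inr x y h.1) (inr_inr_notMem_residEdges x y)

lemma eq_of_mem_of_mem_ab_two_mul (hke : Even k) {j j' : ℕ} (hj : j ≤ k) (hj' : j' ≤ k)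
    {v : ExV k} (hv : v ∈ s(aV k j, bV k (2*j))) (hv' : v ∈ s(aV k j', bV k (2*j'))) :
    j = j' := by
  refine natCast_inj_of_le hj hj' ?_
  rw [Sym2.mem_iff] at hv hv'
  rcases hv with rfl | rfl <;> rcases hv' with h | h <;>
    simp only [aV_eq_aFin, bV_eq_bFin, aFin, bFin, Sum.inl.injEq, Sum.inr.injEq, reduceCtorEq,
      Nat.cast_mul, Nat.cast_ofNat] at h
  · exact h
  · rw [← halfFin_mul_two_mul hke j, h, halfFin_mul_two_mul hke]

theorem IsIndepF.card_le_of_isClique_fiber {V ι : Type*} [Fintype ι] {G : SimpleGraph V}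
    {S : Finset V} (hS : IsIndepF G S) (f : V → ι) (hf : ∀ i, G.IsClique {x | f x = i}) :
    S.card ≤ Fintype.card ι := by
  rw [← Finset.card_univ]
  refine Finset.card_le_card_of_injOn f (fun _ _ => Finset.mem_univ _) fun x hx y hy hxy => ?_
  by_contra hne
  exact hS x hx y hy (hf (f x) rfl hxy.symm hne)

lemma isIndepF_residEx_inl (k : ℕ) :
    IsIndepF (residEx k) (Finset.univ.map ⟨Sum.inl, Sum.inl_injective⟩) := by
  simp only [IsIndepF, Finset.mem_map, Finset.mem_univ, true_and, Function.Embedding.coeFn_mk]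
  rintro _ ⟨x, rfl⟩ _ ⟨y, rfl⟩ h
  exact exGraph_not_adj_inl_inl x y (SimpleGraph.deleteEdges_le _ h)

/-- The residual graph contains the perfect matching `a_p b_{2p}` (`p ≠ 0`), `a_0 w`, `u b_0`;
`leftMate` sends a right vertex to its partner, so the fibres of `Sum.elim id leftMate` are the
edges of this matching. -/
def leftMate (k : ℕ) : Fin (k+1) ⊕ Unit → Fin (k+1) ⊕ Unit
  | .inl q => if q = 0 then .inr () else .inl (halfFin k * q)
  | .inr () => .inl 0

lemma leftMate_injective (hke : Even k) : Function.Injective (leftMate k) := by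
  rintro (q | ⟨⟨⟩⟩) (q' | ⟨⟨⟩⟩) h
  · by_cases hq : q = 0 <;> by_cases hq' : q' = 0 <;>
      simp only [leftMate, hq, hq', if_true, if_false, Sum.inl.injEq, reduceCtorEq] at h
    · rw [hq, hq']
    · rw [← two_mul_halfFin_mul hke q, h, two_mul_halfFin_mul hke]
  · by_cases hq : q = 0 <;> simp only [leftMate, hq, if_true, if_false, Sum.inl.injEq,
      reduceCtorEq] at h
    exact (halfFin_mul_ne_zero hke hq h).elim
  · by_cases hq' : q' = 0 <;> simp only [leftMate, hq', if_true, if_false, Sum.inl.injEq,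
      reduceCtorEq] at h
    exact (halfFin_mul_ne_zero hke hq' h.symm).elim
  · rfl

lemma leftMate_mem_residEdges (hke : Even k) (y : Fin (k+1) ⊕ Unit) :
    s(Sum.inl (leftMate k y), (Sum.inr y : ExV k)) ∈ residEdges k := by
  rcases y with q | ⟨⟨⟩⟩
  · by_cases hq : q = 0
    · subst hq
      exact (ub_mem_residEdges_iff 0).mpr rfl
    · simp only [leftMate, hq, if_false]
      exact (ab_mem_residEdges_iff _ _).mpr
        ⟨halfFin_mul_ne_zero hke hq, (two_mul_halfFin_mul hke q).symm⟩
  · exact (aw_mem_residEdges_iff 0).mpr rfl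

lemma residEx_isClique_fiber (hke : Even k) (i : Fin (k+1) ⊕ Unit) :
    (residEx k).IsClique {x | Sum.elim id (leftMate k) x = i} := by
  have hadj : ∀ y, (residEx k).Adj (Sum.inl (leftMate k y)) (Sum.inr y) := fun y => by
    rw [← SimpleGraph.mem_edgeSet, residEx_edgeSet hke]
    exact leftMate_mem_residEdges hke y
  rintro (x | x) hx (y | y) hy hne <;> simp only [Set.mem_ofPred_eq, Sum.elim_inl, Sum.elim_inr,
    id] at hx hy
  · exact (hne (by rw [hx, hy])).elim
  · rw [hx, ← hy]
    exact hadj y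
  · rw [hy, ← hx]
    exact (hadj x).symm
  · exact (hne (by rw [leftMate_injective hke (hx.trans hy.symm)])).elim

lemma card_eq_of_isMaxIndepF_residEx (hke : Even k) {I : Finset (ExV k)}
    (hI : IsMaxIndepF (residEx k) I) : I.card = k + 2 := by
  have hupper := hI.1.card_le_of_isClique_fiber _ (residEx_isClique_fiber hke)
  have hlower := hI.2 _ (isIndepF_residEx_inl k)
  simp only [Fintype.card_sum, Fintype.card_fin, Fintype.card_unit, Finset.card_map,
    Finset.card_univ] at hupper hlower
  omega

theorem stmt18_general (k : ℕ) (hke : Even k) :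
    (residEx k).edgeSet =
      ↑(((Finset.Icc 1 k).image fun j => s(aV k j, bV k (2*j))) ∪
        ({s(aV k (k+1), wV k), s(uV k, wV k), s(uV k, bV k (k+1))} : Finset (Sym2 (ExV k)))) ∧
    (∀ j ∈ Finset.Icc 1 k, ∀ j' ∈ Finset.Icc 1 k, j ≠ j' →
      ∀ v : ExV k, v ∈ s(aV k j, bV k (2*j)) → v ∉ s(aV k j', bV k (2*j'))) ∧
    (∀ I : Finset (ExV k), IsMaxIndepF (residEx k) I → I.card = k + 2) := by
  refine ⟨residEx_edgeSet hke, fun j hj j' hj' hne v hv hv' => hne ?_,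
    fun I hI => card_eq_of_isMaxIndepF_residEx hke hI⟩
  exact eq_of_mem_of_mem_ab_two_mul hke (Finset.mem_Icc.mp hj).2 (Finset.mem_Icc.mp hj').2 hv hv'

theorem stmt18 (k : ℕ) (hk : 1 ≤ k) (hke : Even k) :
    (residEx k).edgeSet =
      ↑(((Finset.Icc 1 k).image fun j => s(aV k j, bV k (2*j))) ∪
        ({s(aV k (k+1), wV k), s(uV k, wV k), s(uV k, bV k (k+1))} : Finset (Sym2 (ExV k)))) ∧
    (∀ j ∈ Finset.Icc 1 k, ∀ j' ∈ Finset.Icc 1 k, j ≠ j' →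
      ∀ v : ExV k, v ∈ s(aV k j, bV k (2*j)) → v ∉ s(aV k j', bV k (2*j'))) ∧
    (∀ I : Finset (ExV k), IsMaxIndepF (residEx k) I → I.card = k + 2) :=
  stmt18_general k hke
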